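/- Let 𝒟₀ : R → V' be a derivation with extended domain W, extension 𝒟, and boundary form b(v,w) = ⟨𝒟v, w⟩ + conj(⟨𝒟w, v⟩). Let Z ⊆ W be a closed admissible subspace and 𝒜 ∈ L(V, V') coercive with constant α > 0. Then for every continuous antilinear functional L on Z there exists v ∈ V such that −conj(⟨𝒟z, v⟩) + ⟨𝒜v, z⟩ = L(z) for all z ∈ Z. If moreover Z is strongly admissible, this v is unique. -/

import Mathlib

/-!
Identify `V'` with `V` through the Riesz map, so that the graph of `𝒟` over `Z` becomes a closed
subspace `M` of the Hilbert space `V × V`. With `T` the Riesz representative of `z ↦ 𝒜(·) z`, the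
operator `S (z, y) = T z - y` satisfies `Re ⟪S (z, y), z⟫ = Re ⟨𝒜 z, z⟩ - Re ⟨𝒟 z, z⟩ ≥ α ‖z‖²`
on `M` by coercivity and admissibility, hence is bounded below there. Its range is therefore closed,
and the Riesz theorem on that range represents `L`, which gives the solution.
The difference `u` of two solutions has weak derivative `-𝒜 u`, so it is `b`-orthogonal to `Z`;
strong admissibility then gives `0 ≤ -Re ⟨𝒜 u, u⟩ ≤ -α ‖u‖²`.
-/

open InnerProductSpace ComplexConjugate Filter Topology

section Riesz

variable {𝕜 E : Type*} [RCLike 𝕜] [NormedAddCommGroup E] [InnerProductSpace 𝕜 E]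

theorem exists_innerSLFlip_eq [CompleteSpace E] (f : E →L⋆[𝕜] 𝕜) :
    ∃ y : E, innerSLFlip 𝕜 y = f :=
  ⟨(toDual 𝕜 E).symm (((starL 𝕜 : 𝕜 ≃L⋆[𝕜] 𝕜) : 𝕜 →L⋆[𝕜] 𝕜).comp f), by
    ext x; simp [← inner_conj_symm x, toDual_symm_apply]⟩

theorem norm_innerSLFlip_apply_le (y : E) : ‖innerSLFlip 𝕜 y‖ ≤ ‖y‖ :=
  ContinuousLinearMap.opNorm_le_bound _ (norm_nonneg y) fun x => by
    simpa [mul_comm] using norm_inner_le_norm (𝕜 := 𝕜) x y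

theorem mul_norm_le_norm_of_mul_sq_le_re_inner {α : ℝ} {p x : E}
    (h : α * ‖x‖ ^ 2 ≤ RCLike.re ⟪p, x⟫_𝕜) : α * ‖x‖ ≤ ‖p‖ := by
  rcases (norm_nonneg x).eq_or_lt with hx | hx
  · simp [← hx]
  · have hpx : RCLike.re ⟪p, x⟫_𝕜 ≤ ‖p‖ * ‖x‖ :=
      (RCLike.re_le_norm _).trans (norm_inner_le_norm p x)
    exact le_of_mul_le_mul_right (by nlinarith) hx

theorem exists_inner_eq_of_antilipschitzWith [CompleteSpace E] {F : Type*} [NormedAddCommGroup F]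
    [NormedSpace 𝕜 F] [CompleteSpace F] (S : F →L[𝕜] E) {K : NNReal}
    (hS : AntilipschitzWith K S) (ℓ : F →L⋆[𝕜] 𝕜) : ∃ v : E, ∀ x, ⟪S x, v⟫_𝕜 = ℓ x := by
  have hclosed : IsClosed (Set.range S) := hS.isClosed_range S.uniformContinuous
  have : CompleteSpace (LinearMap.range (S : F →ₗ[𝕜] E)) := hclosed.completeSpace_coe
  let e := S.equivRange hS.injective hclosed
  obtain ⟨y, hy⟩ :=
    exists_innerSLFlip_eq (ℓ.comp (e.symm : LinearMap.range (S : F →ₗ[𝕜] E) →L[𝕜] F))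
  refine ⟨y, fun x => ?_⟩
  have h := congr($hy (e x))
  rwa [ContinuousLinearMap.comp_apply, ContinuousLinearEquiv.coe_coe, e.symm_apply_apply,
    innerSLFlip_apply_apply, Submodule.coe_inner] at h

end Riesz

theorem Submodule.exists_continuousLinearMap_eq {𝕜 E F : Type*} [NontriviallyNormedField 𝕜]
    [SeminormedAddCommGroup E] [NormedSpace 𝕜 E] [SeminormedAddCommGroup F] [NormedSpace 𝕜 F]
    {σ : 𝕜 →+* 𝕜} [RingHomIsometric σ] (M : Submodule 𝕜 E) (f : E → F)
    (hadd : ∀ x ∈ M, ∀ y ∈ M, f (x + y) = f x + f y)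
    (hsmul : ∀ (c : 𝕜), ∀ x ∈ M, f (c • x) = σ c • f x)
    (hbdd : ∃ C, ∀ x ∈ M, ‖f x‖ ≤ C * ‖x‖) :
    ∃ g : M →SL[σ] F, ∀ x : M, g x = f x :=
  ⟨LinearMap.mkContinuousOfExistsBound
    { toFun := fun x => f x
      map_add' := fun x y => hadd x x.2 y y.2
      map_smul' := fun c x => hsmul c x x.2 }
    (hbdd.imp fun _ hC x => hC x x.2), fun _ => rfl⟩

section WeakDeriv

variable {𝕜 V : Type*} [RCLike 𝕜] [NormedAddCommGroup V] [InnerProductSpace 𝕜 V]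
  {R : Submodule 𝕜 V} (D0 : R →ₗ[𝕜] V →L⋆[𝕜] 𝕜)

def HasWeakDeriv (v : V) (f : V →L⋆[𝕜] 𝕜) : Prop :=
  ∀ r : R, f r + conj (D0 r v) = 0

def weakDerivDomain : Set V :=
  {v | ∃ f, HasWeakDeriv D0 v f}

/-- The graph of the weak derivative, with `V'` identified with `V` through the Riesz map
`y ↦ ⟪·, y⟫`, so that it is a subspace of the Hilbert space `V × V`. -/
def weakDerivGraph : Submodule 𝕜 (V × V) where
  carrier := {p | HasWeakDeriv D0 p.1 (innerSLFlip 𝕜 p.2)}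
  add_mem' {p q} hp hq r := by
    simp only [Set.mem_ofPred_eq, HasWeakDeriv, Prod.fst_add, Prod.snd_add, map_add,
      add_apply] at *
    linear_combination hp r + hq r
  zero_mem' r := by simp
  smul_mem' c p hp r := by
    simp only [Set.mem_ofPred_eq, HasWeakDeriv, Prod.smul_fst, Prod.smul_snd, map_smul,
      map_smulₛₗ, smul_apply, smul_eq_mul, map_mul, RCLike.conj_conj] at *
    linear_combination c * hp r

variable {D0}

theorem mem_weakDerivGraph {p : V × V} :
    p ∈ weakDerivGraph D0 ↔ HasWeakDeriv D0 p.1 (innerSLFlip 𝕜 p.2) :=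
  Iff.rfl

theorem isClosed_weakDerivGraph : IsClosed (weakDerivGraph D0 : Set (V × V)) := by
  simp only [weakDerivGraph, HasWeakDeriv, Submodule.coe_set_mk, AddSubmonoid.coe_set_mk,
    AddSubsemigroup.coe_set_mk, Set.ofPred_forall, innerSLFlip_apply_apply]
  exact isClosed_iInter fun r => isClosed_eq
    ((continuous_const.inner continuous_snd).add
      (RCLike.continuous_conj.comp ((D0 r).continuous.comp continuous_fst))) continuous_const

theorem HasWeakDeriv.unique (hR : Dense (R : Set V)) {v : V} {f g : V →L⋆[𝕜] 𝕜}
    (hf : HasWeakDeriv D0 v f) (hg : HasWeakDeriv D0 v g) : f = g :=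
  ContinuousLinearMap.ext_on (s := R) (by rwa [Submodule.span_eq]) fun x hx => by
    linear_combination hf ⟨x, hx⟩ - hg ⟨x, hx⟩

theorem hasWeakDeriv_coe (hder : ∀ u v : R, D0 u v + conj (D0 v u) = 0) (r : R) :
    HasWeakDeriv D0 r (D0 r) :=
  hder r

end WeakDeriv

theorem norm_le_mul_norm_sub_of_mul_norm_fst_le {𝕜 E F : Type*} [NontriviallyNormedField 𝕜]
    [SeminormedAddCommGroup E] [NormedSpace 𝕜 E] [SeminormedAddCommGroup F] [NormedSpace 𝕜 F]
    (T : E →L[𝕜] F) {α : ℝ} (hα : 0 < α) {p : E × F} (h : α * ‖p.1‖ ≤ ‖T p.1 - p.2‖) :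
    ‖p‖ ≤ ((1 + ‖T‖) / α + 1) * ‖T p.1 - p.2‖ := by
  set s := ‖T p.1 - p.2‖
  have h1 : ‖p.1‖ ≤ s / α := (le_div_iff₀' hα).2 h
  have h2 : ‖p.2‖ ≤ ‖T‖ * (s / α) + s :=
    calc ‖p.2‖ = ‖T p.1 - (T p.1 - p.2)‖ := by rw [sub_sub_cancel]
      _ ≤ ‖T p.1‖ + s := norm_sub_le _ _
      _ ≤ ‖T‖ * (s / α) + s := by grw [T.le_opNorm, h1]
  have hs : ((1 + ‖T‖) / α + 1) * s = s / α + (‖T‖ * (s / α) + s) := by ring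
  have : 0 ≤ s := norm_nonneg _
  have : 0 ≤ s / α := by positivity
  have : 0 ≤ ‖T‖ * (s / α) := by positivity
  rw [Prod.norm_def, hs]
  exact max_le (by linarith) (by linarith)

section WeakProblem

variable {𝕜 V : Type*} [RCLike 𝕜] [NormedAddCommGroup V] [InnerProductSpace 𝕜 V]
  {R : Submodule 𝕜 V} {D0 : R →ₗ[𝕜] V →L⋆[𝕜] 𝕜} {DD : V → V →L⋆[𝕜] 𝕜} {Z : Submodule 𝕜 V}

theorem isClosed_weakDerivGraph_inf_comap_fst (hR : Dense (R : Set V))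
    (hDD : ∀ v ∈ weakDerivDomain D0, HasWeakDeriv D0 v (DD v))
    (hZW : (Z : Set V) ⊆ weakDerivDomain D0)
    (hZclosed : ∀ u : ℕ → V, (∀ n, u n ∈ Z) → ∀ v ∈ weakDerivDomain D0,
      Tendsto (fun n => ‖u n - v‖ + ‖DD (u n) - DD v‖) atTop (𝓝 0) → v ∈ Z) :
    IsClosed ((weakDerivGraph D0 ⊓ Z.comap (LinearMap.fst 𝕜 V V) : Submodule 𝕜 (V × V)) :
      Set (V × V)) := by
  rw [← isSeqClosed_iff_isClosed]
  intro p q hp hpq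
  have hq : HasWeakDeriv D0 q.1 (innerSLFlip 𝕜 q.2) :=
    isClosed_weakDerivGraph.mem_of_tendsto hpq (Eventually.of_forall fun n => (hp n).1)
  have hqW : q.1 ∈ weakDerivDomain D0 := ⟨_, hq⟩
  refine ⟨hq, hZclosed (fun n => (p n).1) (fun n => (hp n).2) q.1 hqW ?_⟩
  have hDDp n : DD (p n).1 = innerSLFlip 𝕜 (p n).2 := (hDD _ (hZW (hp n).2)).unique hR (hp n).1
  simp_rw [hDDp, (hDD _ hqW).unique hR hq, ← map_sub]
  have h1 := tendsto_iff_norm_sub_tendsto_zero.1 ((continuous_fst.tendsto q).comp hpq)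
  have h2 := tendsto_iff_norm_sub_tendsto_zero.1
    ((((innerSLFlip 𝕜).continuous.comp continuous_snd).tendsto q).comp hpq)
  simpa using h1.add h2

theorem exists_weak_solution [CompleteSpace V] (hR : Dense (R : Set V))
    (hDD : ∀ v ∈ weakDerivDomain D0, HasWeakDeriv D0 v (DD v))
    (hZW : (Z : Set V) ⊆ weakDerivDomain D0) (hZadm : ∀ z ∈ Z, RCLike.re (DD z z) ≤ 0)
    (hZclosed : ∀ u : ℕ → V, (∀ n, u n ∈ Z) → ∀ v ∈ weakDerivDomain D0,
      Tendsto (fun n => ‖u n - v‖ + ‖DD (u n) - DD v‖) atTop (𝓝 0) → v ∈ Z)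
    (𝒜 : V →L[𝕜] V →L⋆[𝕜] 𝕜) {α : ℝ} (hα : 0 < α)
    (hcoer : ∀ u : V, α * ‖u‖ ^ 2 ≤ RCLike.re (𝒜 u u)) (L : V → 𝕜)
    (hLadd : ∀ z₁ ∈ Z, ∀ z₂ ∈ Z, L (z₁ + z₂) = L z₁ + L z₂)
    (hLsmul : ∀ c : 𝕜, ∀ z ∈ Z, L (c • z) = conj c * L z)
    (hLbdd : ∃ C : ℝ, ∀ z ∈ Z, ‖L z‖ ≤ C * (‖z‖ + ‖DD z‖)) :
    ∃ v : V, ∀ z ∈ Z, -conj (DD z v) + 𝒜 v z = L z := by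
  set M := weakDerivGraph D0 ⊓ Z.comap (LinearMap.fst 𝕜 V V)
  have : CompleteSpace M :=
    (isClosed_weakDerivGraph_inf_comap_fst hR hDD hZW hZclosed).completeSpace_coe
  have hDDM : ∀ p ∈ M, DD p.1 = innerSLFlip 𝕜 p.2 := fun p hp =>
    (hDD _ (hZW hp.2)).unique hR hp.1
  set T : V →L[𝕜] V := continuousLinearMapOfBilin 𝒜.flip
  set S : V × V →L[𝕜] V := T ∘L ContinuousLinearMap.fst 𝕜 V V - ContinuousLinearMap.snd 𝕜 V V
  have hS : ∀ p ∈ M, ∀ v, ⟪S p, v⟫_𝕜 = 𝒜 v p.1 - conj (DD p.1 v) := fun p hp v => by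
    simp [S, T, inner_sub_left, continuousLinearMapOfBilin_apply, hDDM p hp]
  have hSM : ∀ p ∈ M, α * ‖p.1‖ ≤ ‖T p.1 - p.2‖ := fun p hp =>
    mul_norm_le_norm_of_mul_sq_le_re_inner (𝕜 := 𝕜) <| by
      rw [show T p.1 - p.2 = S p from rfl, hS p hp, map_sub, RCLike.conj_re]
      linarith [hcoer p.1, hZadm p.1 hp.2]
  obtain ⟨C, hC⟩ := hLbdd
  obtain ⟨ℓ, hℓ⟩ := M.exists_continuousLinearMap_eq (σ := starRingEnd 𝕜) (fun p => L p.1)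
    (fun p hp q hq => hLadd _ hp.2 _ hq.2) (fun c p hp => hLsmul c _ hp.2) ⟨2 * |C|, fun p hp =>
      calc ‖L p.1‖ ≤ C * (‖p.1‖ + ‖DD p.1‖) := hC p.1 hp.2
        _ ≤ |C| * (‖p.1‖ + ‖p.2‖) := by
          rw [hDDM p hp]
          exact mul_le_mul (le_abs_self C) (by grw [norm_innerSLFlip_apply_le]) (by positivity)
            (abs_nonneg C)
        _ ≤ |C| * (‖p‖ + ‖p‖) := by grw [norm_fst_le p, norm_snd_le p]
        _ = 2 * |C| * ‖p‖ := by ring⟩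
  obtain ⟨v, hv⟩ := exists_inner_eq_of_antilipschitzWith (S ∘L M.subtypeL)
    (K := ⟨(1 + ‖T‖) / α + 1, by positivity⟩)
    (ContinuousLinearMap.antilipschitz_of_bound _ fun p =>
      norm_le_mul_norm_sub_of_mul_norm_fst_le T hα (hSM p p.2)) ℓ
  refine ⟨v, fun z hz => ?_⟩
  obtain ⟨y, hy⟩ := exists_innerSLFlip_eq (DD z)
  have hp : (z, y) ∈ M := ⟨mem_weakDerivGraph.2 (hy ▸ hDD z (hZW hz)), hz⟩
  have h := hv ⟨(z, y), hp⟩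
  rw [ContinuousLinearMap.comp_apply, Submodule.subtypeL_apply, hS _ hp, hℓ] at h
  linear_combination h

theorem eq_zero_of_forall_conj_apply_eq (hR : Dense (R : Set V))
    (hder : ∀ u v : R, D0 u v + conj (D0 v u) = 0)
    (hDD : ∀ v ∈ weakDerivDomain D0, HasWeakDeriv D0 v (DD v)) (hRZ : R ≤ Z)
    (hstrong : ∀ u ∈ weakDerivDomain D0, (∀ z ∈ Z, DD u z + conj (DD z u) = 0) →
      0 ≤ RCLike.re (DD u u))
    (𝒜 : V →L[𝕜] V →L⋆[𝕜] 𝕜) {α : ℝ} (hα : 0 < α)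
    (hcoer : ∀ u : V, α * ‖u‖ ^ 2 ≤ RCLike.re (𝒜 u u)) {u : V}
    (hu : ∀ z ∈ Z, conj (DD z u) = 𝒜 u z) : u = 0 := by
  have hDDR (r : R) : DD r = D0 r :=
    (hDD r ⟨_, hasWeakDeriv_coe hder r⟩).unique hR (hasWeakDeriv_coe hder r)
  have hweak : HasWeakDeriv D0 u (-𝒜 u) := fun r => by
    rw [← hDDR r, hu r (hRZ r.2), neg_apply, neg_add_cancel]
  have hDDu : DD u = -𝒜 u := (hDD u ⟨_, hweak⟩).unique hR hweak
  have hnonneg := hstrong u ⟨_, hweak⟩ fun z hz => by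
    rw [hDDu, hu z hz, neg_apply, neg_add_cancel]
  rw [hDDu, neg_apply, map_neg, neg_nonneg] at hnonneg
  have : α * ‖u‖ ^ 2 ≤ 0 := (hcoer u).trans hnonneg
  exact norm_eq_zero.1 (pow_eq_zero_iff two_ne_zero |>.1 <|
    le_antisymm (nonpos_of_mul_nonpos_right this hα) (sq_nonneg _))

end WeakProblem

/-- Theorem 3.5 (well-posedness of the Weak Derivation Problem).
`D0 : R → V'` is a derivation with extended domain `Wset` and extension
`DD`; the boundary form is `b(v,w) = ⟨DD v, w⟩ + conj ⟨DD w, v⟩`.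
`Z` is a closed (for the `W`-norm `‖·‖_V + ‖DD ·‖_{V'}`) admissible
subspace (`R ⊆ Z` and `b(z,z) ≤ 0` on `Z`, i.e. `Re⟨DD z, z⟩ ≤ 0`),
`𝒜 ∈ L(V,V')` is coercive with constant `α > 0`, and `L` is a continuous
antilinear functional on `Z` (for the `W`-norm). Then the weak problem
`-conj⟨DD z, v⟩ + ⟨𝒜 v, z⟩ = L(z)` for all `z ∈ Z` has a solution
`v ∈ V`, which is unique whenever `Z` is strongly admissible
(`b(u,u) ≥ 0` for every `u ∈ Wset` that is `b`-orthogonal to `Z`). -/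
theorem stmt8 {𝕜 V : Type*} [RCLike 𝕜]
    [NormedAddCommGroup V] [InnerProductSpace 𝕜 V] [CompleteSpace V]
    (R : Submodule 𝕜 V) (hR : Dense (R : Set V))
    (D0 : R →ₗ[𝕜] (V →SL[starRingEnd 𝕜] 𝕜))
    (hder : ∀ u v : R, D0 u (v : V) + (starRingEnd 𝕜) (D0 v (u : V)) = 0)
    (Wset : Set V)
    (hWset : Wset = {v : V | ∃ f : V →SL[starRingEnd 𝕜] 𝕜,
        ∀ r : R, f (r : V) + (starRingEnd 𝕜) (D0 r v) = 0})
    (DD : V → (V →SL[starRingEnd 𝕜] 𝕜))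
    (hDD : ∀ v ∈ Wset, ∀ r : R, DD v (r : V) + (starRingEnd 𝕜) (D0 r v) = 0)
    (Z : Submodule 𝕜 V) (hZW : (Z : Set V) ⊆ Wset) (hRZ : R ≤ Z)
    (hZadm : ∀ z ∈ Z, RCLike.re (DD z z) ≤ 0)
    (hZclosed : ∀ u : ℕ → V, (∀ n, u n ∈ Z) → ∀ v ∈ Wset,
        Filter.Tendsto (fun n => ‖u n - v‖ + ‖DD (u n) - DD v‖)
          Filter.atTop (nhds 0) → v ∈ Z)
    (𝒜 : V →L[𝕜] (V →SL[starRingEnd 𝕜] 𝕜)) (α : ℝ) (hα : 0 < α)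
    (hcoer : ∀ u : V, α * ‖u‖ ^ 2 ≤ RCLike.re (𝒜 u u))
    (L : V → 𝕜)
    (hLadd : ∀ z₁ ∈ Z, ∀ z₂ ∈ Z, L (z₁ + z₂) = L z₁ + L z₂)
    (hLsmul : ∀ c : 𝕜, ∀ z ∈ Z, L (c • z) = (starRingEnd 𝕜) c * L z)
    (hLbdd : ∃ C : ℝ, ∀ z ∈ Z, ‖L z‖ ≤ C * (‖z‖ + ‖DD z‖)) :
    (∃ v : V, ∀ z ∈ Z, -(starRingEnd 𝕜) (DD z v) + 𝒜 v z = L z) ∧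
    ((∀ u ∈ Wset, (∀ z ∈ Z, DD u z + (starRingEnd 𝕜) (DD z u) = 0) →
        0 ≤ RCLike.re (DD u u)) →
      ∀ v₁ v₂ : V,
        (∀ z ∈ Z, -(starRingEnd 𝕜) (DD z v₁) + 𝒜 v₁ z = L z) →
        (∀ z ∈ Z, -(starRingEnd 𝕜) (DD z v₂) + 𝒜 v₂ z = L z) → v₁ = v₂) := by
  subst hWset
  refine ⟨exists_weak_solution hR hDD hZW hZadm hZclosed 𝒜 hα hcoer L hLadd hLsmul hLbdd,
    fun hstrong v₁ v₂ h₁ h₂ => sub_eq_zero.1 <|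
      eq_zero_of_forall_conj_apply_eq hR hder hDD hRZ hstrong 𝒜 hα hcoer fun z hz => ?_⟩
  simp only [map_sub, sub_apply]
  linear_combination h₂ z hz - h₁ z hz
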